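/- Let N, M, ℓ ≥ 1, set s = 2ℓ − 1, n = s·N and m = s·M, and let f_R, f_G, f_B and f̃_R, f̃_G, f̃_B : ℝ × ℝ → ℝ be the RGB channels of a continuous color image and of its corrupted version. Define for each channel C ∈ {R, G, B} the matrices I^res_C ∈ ℝ^{N×M} by (I^res_C)_{k,h} = f_C(x_k^N, x_h^M), I^out_C ∈ ℝ^{N×M} by (I^out_C)_{k,h} = L_{n,m}f̃_C(x_k^N, x_h^M), I_C ∈ ℝ^{n×m} by (I_C)_{i,j} = f_C(x_i^n, x_j^m), and I^in_C ∈ ℝ^{n×m} by (I^in_C)_{i,j} = f̃_C(x_i^n, x_j^m). Then the color mean squared error satisfies (1/(3·N·M)) Σ_{C∈{R,G,B}} ‖I^res_C − I^out_C‖_F² ≤ s² · (1/(3·n·m)) Σ_{C∈{R,G,B}} ‖I_C − I^in_C‖_F², where ‖·‖_F is the Frobenius norm. -/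

import Mathlib

/-!
Because `s = 2ℓ - 1` is odd, every Chebyshev node of order `μ` is also a node of order `s μ`:
`x_k^μ = x_{s (k - 1) + ℓ}^{s μ}`. Lagrange interpolation reproduces its data at its own
nodes, so on the coarse grid the output `L_{n,m} f̃` equals the corrupted input `f̃`. Each
channel's output error is thus a partial sum of the squared input errors, and the factor `s²`
exactly absorbs the normalisation `1 / (n m) = 1 / (s² N M)`.
-/

open Real Finset

/-- First-kind Chebyshev node of order `μ` at index `k`: `cos((2k-1)π/(2μ))`. -/
noncomputable def chebNode (μ k : ℕ) : ℝ :=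
  Real.cos ((2 * (k : ℝ) - 1) * Real.pi / (2 * (μ : ℝ)))

/-- `k`-th fundamental Lagrange polynomial on the first-kind Chebyshev nodes of order `μ`. -/
noncomputable def lagrangeFund (μ k : ℕ) (ξ : ℝ) : ℝ :=
  ∏ s ∈ (Finset.Icc 1 μ).erase k, (ξ - chebNode μ s) / (chebNode μ k - chebNode μ s)

/-- Bivariate tensor-product Lagrange–Chebyshev interpolation polynomial `L_{n,m} g`. -/
noncomputable def lagrangeCheb (n m : ℕ) (g : ℝ × ℝ → ℝ) (x y : ℝ) : ℝ :=
  ∑ i ∈ Finset.Icc 1 n, ∑ j ∈ Finset.Icc 1 m,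
    g (chebNode n i, chebNode m j) * lagrangeFund n i x * lagrangeFund m j y

/-- Squared Frobenius distance between the value matrices of two functions sampled at the
Chebyshev grid `X_{P×Q}`. -/
noncomputable def frobSq (P Q : ℕ) (u v : ℕ → ℕ → ℝ) : ℝ :=
  ∑ p ∈ Finset.Icc 1 P, ∑ q ∈ Finset.Icc 1 Q, (u p q - v p q) ^ 2

theorem Finset.sum_comp_le_sum_of_injOn {ι κ R : Type*} [AddCommMonoid R] [PartialOrder R]
    [IsOrderedAddMonoid R] {s : Finset ι} {t : Finset κ} {e : ι → κ}
    (he : Set.MapsTo e s t) (hinj : Set.InjOn e s) {F : κ → R} (hF : ∀ i ∈ t, 0 ≤ F i) :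
    ∑ k ∈ s, F (e k) ≤ ∑ i ∈ t, F i := by
  classical
  rw [← sum_image hinj]
  exact sum_le_sum_of_subset_of_nonneg (image_subset_iff.mpr he)
    fun i hi _ => hF i hi

theorem frobSq_comp_le {P Q P' Q' : ℕ} {e₁ e₂ : ℕ → ℕ}
    (he₁ : Set.MapsTo e₁ (Icc 1 P : Set ℕ) (Icc 1 P'))
    (hinj₁ : Set.InjOn e₁ (Icc 1 P : Set ℕ))
    (he₂ : Set.MapsTo e₂ (Icc 1 Q : Set ℕ) (Icc 1 Q'))
    (hinj₂ : Set.InjOn e₂ (Icc 1 Q : Set ℕ)) (u v : ℕ → ℕ → ℝ) :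
    frobSq P Q (fun p q => u (e₁ p) (e₂ q)) (fun p q => v (e₁ p) (e₂ q)) ≤
      frobSq P' Q' u v := by
  unfold frobSq
  calc ∑ p ∈ Icc 1 P, ∑ q ∈ Icc 1 Q, (u (e₁ p) (e₂ q) - v (e₁ p) (e₂ q)) ^ 2
      ≤ ∑ p ∈ Icc 1 P, ∑ q ∈ Icc 1 Q', (u (e₁ p) q - v (e₁ p) q) ^ 2 :=
        sum_le_sum fun p _ => sum_comp_le_sum_of_injOn
          (F := fun q => (u (e₁ p) q - v (e₁ p) q) ^ 2) he₂ hinj₂ fun q _ => sq_nonneg _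
    _ ≤ ∑ p ∈ Icc 1 P', ∑ q ∈ Icc 1 Q', (u p q - v p q) ^ 2 :=
        sum_comp_le_sum_of_injOn (F := fun p => ∑ q ∈ Icc 1 Q', (u p q - v p q) ^ 2)
          he₁ hinj₁ fun p _ => sum_nonneg fun q _ => sq_nonneg _

theorem chebNode_angle_mem_Icc {μ k : ℕ} (hk : k ∈ Set.Icc 1 μ) :
    (2 * (k : ℝ) - 1) * π / (2 * μ) ∈ Set.Icc 0 π := by
  have hk₁ : (1 : ℝ) ≤ k := by exact_mod_cast hk.1
  have hkμ : (k : ℝ) ≤ μ := by exact_mod_cast hk.2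
  refine ⟨div_nonneg (by nlinarith [pi_pos]) (by positivity), ?_⟩
  rw [div_le_iff₀ (by linarith)]
  nlinarith [pi_pos]

theorem chebNode_injOn (μ : ℕ) : Set.InjOn (chebNode μ) (Set.Icc 1 μ) := by
  intro k hk k' hk' h
  have hμ : (0 : ℝ) < μ := by exact_mod_cast hk.1.trans hk.2
  have hangle := injOn_cos (chebNode_angle_mem_Icc hk) (chebNode_angle_mem_Icc hk') h
  simp only [mul_div_assoc] at hangle
  have := mul_right_cancel₀ (div_pos pi_pos (by linarith)).ne' hangle
  exact_mod_cast (by linarith : (k : ℝ) = k')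

theorem lagrangeFund_chebNode_self {μ k : ℕ} (hk : k ∈ Icc 1 μ) :
    lagrangeFund μ k (chebNode μ k) = 1 :=
  prod_eq_one fun _ hs => div_self <| sub_ne_zero.mpr <|
    (chebNode_injOn μ).ne (mem_Icc.mp hk) (mem_Icc.mp (mem_of_mem_erase hs))
      (ne_of_mem_erase hs).symm

theorem lagrangeFund_chebNode_of_ne {μ k k' : ℕ} (hk' : k' ∈ Icc 1 μ) (hne : k' ≠ k) :
    lagrangeFund μ k (chebNode μ k') = 0 :=
  prod_eq_zero (mem_erase.mpr ⟨hne, hk'⟩) (by rw [sub_self, zero_div])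

theorem lagrangeCheb_chebNode (n m : ℕ) (g : ℝ × ℝ → ℝ) {i j : ℕ}
    (hi : i ∈ Icc 1 n) (hj : j ∈ Icc 1 m) :
    lagrangeCheb n m g (chebNode n i) (chebNode m j) = g (chebNode n i, chebNode m j) := by
  unfold lagrangeCheb
  rw [sum_eq_single_of_mem i hi, sum_eq_single_of_mem j hj,
    lagrangeFund_chebNode_self hi, lagrangeFund_chebNode_self hj, mul_one, mul_one]
  · intro j' _ hj'
    rw [lagrangeFund_chebNode_of_ne hj hj'.symm, mul_zero]
  · intro i' _ hi'
    refine sum_eq_zero fun j' _ => ?_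
    rw [lagrangeFund_chebNode_of_ne hi hi'.symm, mul_zero, zero_mul]

theorem Nat.cast_two_mul_sub_one {R : Type*} [NonAssocRing R] {ℓ : ℕ} (hℓ : 1 ≤ ℓ) :
    ((2 * ℓ - 1 : ℕ) : R) = 2 * (ℓ : R) - 1 := by
  push_cast [Nat.cast_sub (by omega : 1 ≤ 2 * ℓ)]
  rfl

/-- Chosen so that `2 (s (k - 1) + ℓ) - 1 = s (2k - 1)` for `s = 2ℓ - 1`. -/
def refineIndex (ℓ k : ℕ) : ℕ :=
  (2 * ℓ - 1) * (k - 1) + ℓ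

theorem mapsTo_refineIndex {ℓ : ℕ} (hℓ : 1 ≤ ℓ) (μ : ℕ) :
    Set.MapsTo (refineIndex ℓ) (Icc 1 μ : Set ℕ) (Icc 1 ((2 * ℓ - 1) * μ)) := by
  intro k hk
  simp only [coe_Icc, Set.mem_Icc] at hk ⊢
  have : (2 * ℓ - 1) * (k - 1) ≤ (2 * ℓ - 1) * (μ - 1) := Nat.mul_le_mul_left _ (by omega)
  have : (2 * ℓ - 1) * μ = (2 * ℓ - 1) * (μ - 1) + (2 * ℓ - 1) := by
    rw [← Nat.mul_add_one, Nat.sub_add_cancel (by omega)]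
  unfold refineIndex
  omega

theorem injOn_refineIndex {ℓ : ℕ} (hℓ : 1 ≤ ℓ) :
    Set.InjOn (refineIndex ℓ) (Set.Ici 1) := by
  intro a ha b hb hab
  have := Nat.eq_of_mul_eq_mul_left (by omega) (Nat.add_right_cancel hab)
  simp only [Set.mem_Ici] at ha hb
  omega

theorem chebNode_refineIndex {ℓ k : ℕ} (hℓ : 1 ≤ ℓ) (hk : 1 ≤ k) (μ : ℕ) :
    chebNode ((2 * ℓ - 1) * μ) (refineIndex ℓ k) = chebNode μ k := by
  have hs : (2 * (ℓ : ℝ) - 1) ≠ 0 := by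
    have : (1 : ℝ) ≤ ℓ := by exact_mod_cast hℓ
    linarith
  have hidx : 2 * (refineIndex ℓ k : ℝ) - 1 = (2 * ℓ - 1) * (2 * k - 1) := by
    unfold refineIndex
    push_cast [Nat.cast_two_mul_sub_one hℓ, Nat.cast_sub hk]
    ring
  unfold chebNode
  rw [hidx, Nat.cast_mul, Nat.cast_two_mul_sub_one hℓ, mul_left_comm (2 : ℝ), mul_assoc,
    mul_div_mul_left _ _ hs]

theorem frobSq_lagrangeCheb_le {ℓ : ℕ} (hℓ : 1 ≤ ℓ) (N M : ℕ)
    (f ft : ℝ × ℝ → ℝ) :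
    frobSq N M (fun k h => f (chebNode N k, chebNode M h))
      (fun k h => lagrangeCheb ((2 * ℓ - 1) * N) ((2 * ℓ - 1) * M) ft
        (chebNode N k) (chebNode M h)) ≤
    frobSq ((2 * ℓ - 1) * N) ((2 * ℓ - 1) * M)
      (fun i j => f (chebNode ((2 * ℓ - 1) * N) i, chebNode ((2 * ℓ - 1) * M) j))
      (fun i j => ft (chebNode ((2 * ℓ - 1) * N) i, chebNode ((2 * ℓ - 1) * M) j)) := by
  have hinj : ∀ μ, Set.InjOn (refineIndex ℓ) (Icc 1 μ : Set ℕ) := fun μ =>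
    (injOn_refineIndex hℓ).mono fun k hk => (mem_Icc.mp hk).1
  refine le_of_eq_of_le ?_ (frobSq_comp_le (mapsTo_refineIndex hℓ N) (hinj N)
    (mapsTo_refineIndex hℓ M) (hinj M) _ _)
  refine sum_congr rfl fun k hk => sum_congr rfl fun h hh => ?_
  dsimp only
  rw [← chebNode_refineIndex hℓ (mem_Icc.mp hk).1 N,
    ← chebNode_refineIndex hℓ (mem_Icc.mp hh).1 M,
    lagrangeCheb_chebNode _ _ _ (mapsTo_refineIndex hℓ N hk) (mapsTo_refineIndex hℓ M hh)]

theorem mse_bound_rgb_general (N M ℓ : ℕ) (hℓ : 1 ≤ ℓ)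
    (fR fG fB ftR ftG ftB : ℝ × ℝ → ℝ) :
    (1 / (3 * (N : ℝ) * (M : ℝ))) *
        (frobSq N M (fun k h => fR (chebNode N k, chebNode M h))
            (fun k h => lagrangeCheb ((2 * ℓ - 1) * N) ((2 * ℓ - 1) * M) ftR
              (chebNode N k) (chebNode M h)) +
          frobSq N M (fun k h => fG (chebNode N k, chebNode M h))
            (fun k h => lagrangeCheb ((2 * ℓ - 1) * N) ((2 * ℓ - 1) * M) ftG
              (chebNode N k) (chebNode M h)) +
          frobSq N M (fun k h => fB (chebNode N k, chebNode M h))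
            (fun k h => lagrangeCheb ((2 * ℓ - 1) * N) ((2 * ℓ - 1) * M) ftB
              (chebNode N k) (chebNode M h))) ≤
      ((2 * (ℓ : ℝ) - 1)) ^ 2 *
        ((1 / (3 * (((2 * ℓ - 1) * N : ℕ) : ℝ) * (((2 * ℓ - 1) * M : ℕ) : ℝ))) *
          (frobSq ((2 * ℓ - 1) * N) ((2 * ℓ - 1) * M)
              (fun i j => fR (chebNode ((2 * ℓ - 1) * N) i, chebNode ((2 * ℓ - 1) * M) j))
              (fun i j => ftR (chebNode ((2 * ℓ - 1) * N) i, chebNode ((2 * ℓ - 1) * M) j)) +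
            frobSq ((2 * ℓ - 1) * N) ((2 * ℓ - 1) * M)
              (fun i j => fG (chebNode ((2 * ℓ - 1) * N) i, chebNode ((2 * ℓ - 1) * M) j))
              (fun i j => ftG (chebNode ((2 * ℓ - 1) * N) i, chebNode ((2 * ℓ - 1) * M) j)) +
            frobSq ((2 * ℓ - 1) * N) ((2 * ℓ - 1) * M)
              (fun i j => fB (chebNode ((2 * ℓ - 1) * N) i, chebNode ((2 * ℓ - 1) * M) j))
              (fun i j => ftB (chebNode ((2 * ℓ - 1) * N) i, chebNode ((2 * ℓ - 1) * M) j)))) := by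
  have hs : (2 * (ℓ : ℝ) - 1) ≠ 0 := by
    have : (1 : ℝ) ≤ ℓ := by exact_mod_cast hℓ
    linarith
  have hscale : (2 * (ℓ : ℝ) - 1) ^ 2 *
      (1 / (3 * (((2 * ℓ - 1) * N : ℕ) : ℝ) * (((2 * ℓ - 1) * M : ℕ) : ℝ))) =
      1 / (3 * (N : ℝ) * (M : ℝ)) := by
    have hden : 3 * ((2 * (ℓ : ℝ) - 1) * N) * ((2 * ℓ - 1) * M) =
        (2 * ℓ - 1) ^ 2 * (3 * N * M) := by ring
    rw [Nat.cast_mul, Nat.cast_mul, Nat.cast_two_mul_sub_one hℓ, one_div, one_div, hden,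
      mul_inv, mul_inv_cancel_left₀ (pow_ne_zero 2 hs)]
  rw [← mul_assoc, hscale]
  gcongr <;> exact frobSq_lagrangeCheb_le hℓ N M _ _

/-- the color (RGB) mean squared error of d-LCI with odd scale factor
`s = 2ℓ - 1` is bounded by `s²` times the color MSE of the input data. -/
theorem mse_bound_rgb (N M ℓ : ℕ) (hN : 1 ≤ N) (hM : 1 ≤ M) (hℓ : 1 ≤ ℓ)
    (fR fG fB ftR ftG ftB : ℝ × ℝ → ℝ) :
    (1 / (3 * (N : ℝ) * (M : ℝ))) *
        (frobSq N M (fun k h => fR (chebNode N k, chebNode M h))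
            (fun k h => lagrangeCheb ((2 * ℓ - 1) * N) ((2 * ℓ - 1) * M) ftR
              (chebNode N k) (chebNode M h)) +
          frobSq N M (fun k h => fG (chebNode N k, chebNode M h))
            (fun k h => lagrangeCheb ((2 * ℓ - 1) * N) ((2 * ℓ - 1) * M) ftG
              (chebNode N k) (chebNode M h)) +
          frobSq N M (fun k h => fB (chebNode N k, chebNode M h))
            (fun k h => lagrangeCheb ((2 * ℓ - 1) * N) ((2 * ℓ - 1) * M) ftB
              (chebNode N k) (chebNode M h))) ≤
      ((2 * (ℓ : ℝ) - 1)) ^ 2 *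
        ((1 / (3 * (((2 * ℓ - 1) * N : ℕ) : ℝ) * (((2 * ℓ - 1) * M : ℕ) : ℝ))) *
          (frobSq ((2 * ℓ - 1) * N) ((2 * ℓ - 1) * M)
              (fun i j => fR (chebNode ((2 * ℓ - 1) * N) i, chebNode ((2 * ℓ - 1) * M) j))
              (fun i j => ftR (chebNode ((2 * ℓ - 1) * N) i, chebNode ((2 * ℓ - 1) * M) j)) +
            frobSq ((2 * ℓ - 1) * N) ((2 * ℓ - 1) * M)
              (fun i j => fG (chebNode ((2 * ℓ - 1) * N) i, chebNode ((2 * ℓ - 1) * M) j))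
              (fun i j => ftG (chebNode ((2 * ℓ - 1) * N) i, chebNode ((2 * ℓ - 1) * M) j)) +
            frobSq ((2 * ℓ - 1) * N) ((2 * ℓ - 1) * M)
              (fun i j => fB (chebNode ((2 * ℓ - 1) * N) i, chebNode ((2 * ℓ - 1) * M) j))
              (fun i j => ftB (chebNode ((2 * ℓ - 1) * N) i, chebNode ((2 * ℓ - 1) * M) j)))) :=
  mse_bound_rgb_general N M ℓ hℓ fR fG fB ftR ftG ftB
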